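/- arXiv:2510.22231 — 5 statements merged into one kernel-verified Lean document; each statement's English description precedes it below -/
import Mathlib

section
/- Let g : ℝ → ℝ be continuous, nondecreasing, and satisfy the high-order majorization property with power p > 1 (for all s, t ∈ ℝ and λ ∈ [0,1]: λg(s) + (1−λ)g(t) ≤ g(λs + (1−λ)t) + c|s − t|^p for some c > 0). Let φ : ℝⁿ → ℝ be concave and ν-Hölder continuous with constant L_ν and ν ∈ (0,1]. Then the composition x ↦ g(φ(x)) satisfies, for all x, y ∈ ℝⁿ and λ ∈ [0,1]: λ g(φ(x)) + (1−λ) g(φ(y)) ≤ g(φ(λx + (1−λ)y)) + c L_ν^p ‖x − y‖^(pν). -/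
theorem abs_sub_rpow_le_of_le_mul_rpow {a b L r ν p : ℝ} (hL : 0 ≤ L) (hr : 0 ≤ r) (hp : 0 ≤ p)
    (h : |a - b| ≤ L * r ^ ν) : |a - b| ^ p ≤ L ^ p * r ^ (p * ν) :=
  calc |a - b| ^ p ≤ (L * r ^ ν) ^ p := Real.rpow_le_rpow (abs_nonneg _) h hp
    _ = L ^ p * r ^ (p * ν) := by
      rw [Real.mul_rpow hL (Real.rpow_nonneg hr _), ← Real.rpow_mul hr, mul_comm ν p]

theorem stmt_5_general {n : ℕ} (g : ℝ → ℝ) (φ : EuclideanSpace ℝ (Fin n) → ℝ)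
    (p c ν L : ℝ) (hp : 1 < p) (hc : 0 < c) (hL : 0 < L)
    (hgmono : Monotone g)
    (hgmaj : ∀ s t l : ℝ, 0 ≤ l → l ≤ 1 →
      l * g s + (1 - l) * g t ≤ g (l * s + (1 - l) * t) + c * |s - t| ^ p)
    (hconc : ConcaveOn ℝ Set.univ φ)
    (hHolder : ∀ x y, |φ x - φ y| ≤ L * ‖x - y‖ ^ ν) :
    ∀ (x y : EuclideanSpace ℝ (Fin n)) (l : ℝ), 0 ≤ l → l ≤ 1 →
      l * g (φ x) + (1 - l) * g (φ y) ≤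
        g (φ (l • x + (1 - l) • y)) + c * L ^ p * ‖x - y‖ ^ (p * ν) := by
  intro x y l hl0 hl1
  have hconc_xy : l * φ x + (1 - l) * φ y ≤ φ (l • x + (1 - l) • y) :=
    hconc.2 (Set.mem_univ x) (Set.mem_univ y) hl0 (sub_nonneg.2 hl1) (add_sub_cancel l 1)
  have hpow : |φ x - φ y| ^ p ≤ L ^ p * ‖x - y‖ ^ (p * ν) :=
    abs_sub_rpow_le_of_le_mul_rpow hL.le (norm_nonneg _) (zero_le_one.trans hp.le) (hHolder x y)
  calc l * g (φ x) + (1 - l) * g (φ y)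
      ≤ g (l * φ x + (1 - l) * φ y) + c * |φ x - φ y| ^ p := hgmaj _ _ l hl0 hl1
    _ ≤ g (φ (l • x + (1 - l) • y)) + c * (L ^ p * ‖x - y‖ ^ (p * ν)) := by
      gcongr
      exact hgmono hconc_xy
    _ = g (φ (l • x + (1 - l) • y)) + c * L ^ p * ‖x - y‖ ^ (p * ν) := by ring

theorem stmt_5 {n : ℕ} (g : ℝ → ℝ) (φ : EuclideanSpace ℝ (Fin n) → ℝ)
    (p c ν L : ℝ) (hp : 1 < p) (hc : 0 < c) (hν0 : 0 < ν) (hν1 : ν ≤ 1) (hL : 0 < L)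
    (hgcont : Continuous g) (hgmono : Monotone g)
    (hgmaj : ∀ s t l : ℝ, 0 ≤ l → l ≤ 1 →
      l * g s + (1 - l) * g t ≤ g (l * s + (1 - l) * t) + c * |s - t| ^ p)
    (hconc : ConcaveOn ℝ Set.univ φ)
    (hHolder : ∀ x y, |φ x - φ y| ≤ L * ‖x - y‖ ^ ν) :
    ∀ (x y : EuclideanSpace ℝ (Fin n)) (l : ℝ), 0 ≤ l → l ≤ 1 →
      l * g (φ x) + (1 - l) * g (φ y) ≤
        g (φ (l • x + (1 - l) • y)) + c * L ^ p * ‖x - y‖ ^ (p * ν) :=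
  stmt_5_general g φ p c ν L hp hc hL hgmono hgmaj hconc hHolder
end

section
/- Under the high-order descent lemma for f with power p > 1 and constant L_p > 0, and with g proper lsc, for every γ with 0 < γ < 1/L_p the infimum of the composite φ = f + g over ℝⁿ equals the infimum of its high-order forward-backward envelope φ_γ^p over ℝⁿ. -/
open scoped RealInnerProductSpace

/-- The high-order forward-backward envelope (HiFBE). -/
noncomputable def hifbe {n : ℕ} (f : EuclideanSpace ℝ (Fin n) → ℝ)
    (f' : EuclideanSpace ℝ (Fin n) → EuclideanSpace ℝ (Fin n))
    (g : EuclideanSpace ℝ (Fin n) → EReal) (p γ : ℝ)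
    (x : EuclideanSpace ℝ (Fin n)) : EReal :=
  ⨅ y : EuclideanSpace ℝ (Fin n),
    ((f x + ⟪f' x, y - x⟫ + 1 / (p * γ) * ‖x - y‖ ^ p : ℝ) : EReal) + g y

theorem stmt_8 {n : ℕ} (f : EuclideanSpace ℝ (Fin n) → ℝ)
    (f' : EuclideanSpace ℝ (Fin n) → EuclideanSpace ℝ (Fin n))
    (g : EuclideanSpace ℝ (Fin n) → EReal) (p L γ : ℝ)
    (hp : 1 < p) (hL : 0 < L) (hγ0 : 0 < γ) (hγ1 : γ < 1 / L)
    (hdiff : ∀ x, HasGradientAt f (f' x) x)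
    (hdesc : ∀ x y, f y ≤ f x + ⟪f' x, y - x⟫ + L / p * ‖y - x‖ ^ p)
    (hproper_ne_top : ∃ x, g x ≠ ⊤) (hproper_ne_bot : ∀ x, g x ≠ ⊥)
    (hlsc : LowerSemicontinuous g) :
    (⨅ x : EuclideanSpace ℝ (Fin n), (f x : EReal) + g x) =
      ⨅ x : EuclideanSpace ℝ (Fin n), hifbe f f' g p γ x := by
  have hp0 : (0:ℝ) < p := by linarith
  have hcoef : L / p ≤ 1 / (p * γ) := by
    rw [div_le_div_iff₀ hp0 (by positivity)]
    have hLγ : L * γ < 1 := by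
      have := (lt_div_iff₀ hL).mp hγ1
      nlinarith
    nlinarith
  -- key pointwise inequality
  have hterm : ∀ x y : EuclideanSpace ℝ (Fin n),
      ((f y : EReal) + g y) ≤
        ((f x + ⟪f' x, y - x⟫ + 1 / (p * γ) * ‖x - y‖ ^ p : ℝ) : EReal) + g y := by
    intro x y
    refine add_le_add_left ?_ (g y)
    rw [EReal.coe_le_coe_iff]
    have h1 := hdesc x y
    have h2 : L / p * ‖y - x‖ ^ p ≤ 1 / (p * γ) * ‖x - y‖ ^ p := by
      rw [norm_sub_rev y x]
      exact mul_le_mul_of_nonneg_right hcoef (Real.rpow_nonneg (norm_nonneg _) p)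
    linarith
  have hdiag : ∀ x : EuclideanSpace ℝ (Fin n),
      ((f x + ⟪f' x, x - x⟫ + 1 / (p * γ) * ‖x - x‖ ^ p : ℝ) : EReal) + g x
        = (f x : EReal) + g x := by
    intro x
    norm_num [sub_self, inner_zero_right, Real.zero_rpow (ne_of_gt hp0)]
  apply le_antisymm
  · refine le_iInf fun x => le_iInf fun y => ?_
    exact le_trans (iInf_le _ y) (hterm x y)
  · refine le_iInf fun x => ?_
    calc (⨅ x, hifbe f f' g p γ x) ≤ hifbe f f' g p γ x := iInf_le _ x
      _ ≤ _ := iInf_le _ x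
      _ = (f x : EReal) + g x := hdiag x
end

section
/- The set of global minimizers of φ = f + g coincides with the set of global minimizers of the high-order forward-backward envelope φ_γ^p, for any γ ∈ (0, min{1/L_p, γ^{g,p}}), under the standing assumptions (f satisfies the high-order descent lemma with power p and constant L_p; g is proper lsc and high-order prox-bounded with threshold γ^{g,p}). -/
open scoped RealInnerProductSpace

/-- A linear function is dominated by `c * t ^ p` plus a constant, for `p > 1`. -/
lemma aux_linear_le_rpow (a c p : ℝ) (ha : 0 ≤ a) (hc : 0 < c) (hp : 1 < p) :
    ∃ C : ℝ, ∀ t : ℝ, 0 ≤ t → a * t ≤ c * t ^ p + C := by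
  set T : ℝ := max 1 ((a / c) ^ (1 / (p - 1))) with hT
  have hT1 : (1 : ℝ) ≤ T := le_max_left _ _
  have hT0 : 0 ≤ T := by linarith
  refine ⟨a * T, fun t ht => ?_⟩
  rcases le_or_gt t T with h | h
  · have h1 : a * t ≤ a * T := mul_le_mul_of_nonneg_left h ha
    have h2 : 0 ≤ c * t ^ p := mul_nonneg hc.le (Real.rpow_nonneg ht p)
    linarith
  · -- t > T ≥ 1, show a * t ≤ c * t ^ p
    have htpos : 0 < t := lt_of_lt_of_le (by linarith) h.le
    have hac : a / c ≤ T ^ (p - 1) := by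
      calc a / c = ((a / c) ^ (1 / (p - 1))) ^ (p - 1) := by
            rw [← Real.rpow_mul (div_nonneg ha hc.le), one_div_mul_cancel (by linarith),
              Real.rpow_one]
        _ ≤ T ^ (p - 1) :=
            Real.rpow_le_rpow (Real.rpow_nonneg (div_nonneg ha hc.le) _)
              (le_max_right _ _) (by linarith)
    have hTt : T ^ (p - 1) ≤ t ^ (p - 1) := Real.rpow_le_rpow hT0 h.le (by linarith)
    have h3 : a ≤ c * t ^ (p - 1) := by
      rw [div_le_iff₀ hc] at hac
      calc a ≤ T ^ (p - 1) * c := hac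
        _ ≤ t ^ (p - 1) * c := mul_le_mul_of_nonneg_right hTt hc.le
        _ = c * t ^ (p - 1) := mul_comm _ _
    have h4 : a * t ≤ c * t ^ (p - 1) * t := mul_le_mul_of_nonneg_right h3 ht
    have h5 : c * t ^ (p - 1) * t = c * t ^ p := by
      have h7 : t ^ (p - 1) * t ^ (1:ℝ) = t ^ p := by
        rw [← Real.rpow_add htpos]; norm_num
      rw [mul_assoc, ← h7, Real.rpow_one]
    have h6 : 0 ≤ a * T := mul_nonneg ha hT0
    linarith [h4, h5, h6]

theorem stmt_11 {n : ℕ} (f : EuclideanSpace ℝ (Fin n) → ℝ)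
    (f' : EuclideanSpace ℝ (Fin n) → EuclideanSpace ℝ (Fin n))
    (g : EuclideanSpace ℝ (Fin n) → EReal) (p L γgp γ : ℝ)
    (hp : 1 < p) (hL : 0 < L) (hγgp : 0 < γgp)
    (hγ0 : 0 < γ) (hγ1 : γ < min (1 / L) γgp)
    (hdiff : ∀ z, HasGradientAt f (f' z) z)
    (hdesc : ∀ x y, f y ≤ f x + ⟪f' x, y - x⟫ + L / p * ‖y - x‖ ^ p)
    (hproper_ne_top : ∃ z, g z ≠ ⊤) (hproper_ne_bot : ∀ z, g z ≠ ⊥)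
    (hlsc : LowerSemicontinuous g)
    (hproxb : ∀ γ' : ℝ, 0 < γ' → γ' < γgp → ∀ x : EuclideanSpace ℝ (Fin n),
      (⨅ y : EuclideanSpace ℝ (Fin n),
        g y + ((1 / (p * γ') * ‖x - y‖ ^ p : ℝ) : EReal)) ≠ ⊥) :
    {x : EuclideanSpace ℝ (Fin n) | ∀ y, (f x : EReal) + g x ≤ (f y : EReal) + g y} =
      {x : EuclideanSpace ℝ (Fin n) | ∀ y, hifbe f f' g p γ x ≤ hifbe f f' g p γ y} := by
  have hp0 : (0:ℝ) < p := by linarith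
  have hγL : γ < 1 / L := lt_of_lt_of_le hγ1 (min_le_left _ _)
  have hγg : γ < γgp := lt_of_lt_of_le hγ1 (min_le_right _ _)
  set φ : EuclideanSpace ℝ (Fin n) → EReal := fun y => (f y : EReal) + g y with hφdef
  -- the constant c = 1/(pγ) - L/p > 0
  have hc : 0 < 1 / (p * γ) - L / p := by
    rw [sub_pos, div_lt_div_iff₀ hp0 (mul_pos hp0 hγ0)]
    have : L * γ < 1 := by
      rw [← lt_div_iff₀' hL]; exact hγL
    nlinarith
  obtain ⟨c, hc, hceq⟩ : ∃ c : ℝ, 0 < c ∧ c = 1 / (p * γ) - L / p := ⟨_, hc, rfl⟩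
  -- descent bound on the quadratic model
  have hR : ∀ x y : EuclideanSpace ℝ (Fin n),
      f y + c * ‖x - y‖ ^ p ≤ f x + ⟪f' x, y - x⟫ + 1 / (p * γ) * ‖x - y‖ ^ p := by
    intro x y
    have := hdesc x y
    rw [norm_sub_rev y x] at this
    have hnn : (0:ℝ) ≤ ‖x - y‖ ^ p := Real.rpow_nonneg (norm_nonneg _) p
    rw [hceq]
    nlinarith [this]
  -- hifbe ≤ φ (take y = x)
  have hA : ∀ x, hifbe f f' g p γ x ≤ φ x := by
    intro x
    refine le_trans (iInf_le _ x) (le_of_eq ?_)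
    have h1 : (⟪f' x, x - x⟫ : ℝ) = 0 := by simp
    have h2 : ‖x - x‖ ^ p = 0 := by
      simp [Real.zero_rpow (ne_of_gt hp0)]
    rw [h1, h2]
    norm_num; rfl
  -- inf φ ≤ hifbe x
  have hB : ∀ x, (⨅ z, φ z) ≤ hifbe f f' g p γ x := by
    intro x
    refine le_iInf fun y => le_trans (iInf_le _ y) ?_
    refine add_le_add_left ?_ (g y)
    rw [EReal.coe_le_coe_iff]
    have hnn : (0:ℝ) ≤ c * ‖x - y‖ ^ p :=
      mul_nonneg hc.le (Real.rpow_nonneg (norm_nonneg _) p)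
    linarith [hR x y]
  -- hifbe is never ⊥
  have hbot : ∀ x, hifbe f f' g p γ x ≠ ⊥ := by
    intro x
    set γ'' : ℝ := (γ + γgp) / 2 with hγ''def
    have hγ''0 : 0 < γ'' := by positivity
    have hγ''lt : γ'' < γgp := by rw [hγ''def]; linarith
    have hγlt : γ < γ'' := by rw [hγ''def]; linarith
    have hc' : 0 < 1 / (p * γ) - 1 / (p * γ'') := by
      rw [sub_pos]
      exact one_div_lt_one_div_of_lt (mul_pos hp0 hγ0)
        (by nlinarith)
    obtain ⟨C, hC⟩ := aux_linear_le_rpow ‖f' x‖ _ p (norm_nonneg _) hc' hp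
    set B : EReal := ⨅ y, g y + ((1 / (p * γ'') * ‖x - y‖ ^ p : ℝ) : EReal) with hBdef
    have hBbot : B ≠ ⊥ := hproxb γ'' hγ''0 hγ''lt x
    have hBtop : B ≠ ⊤ := by
      obtain ⟨z, hz⟩ := hproper_ne_top
      refine ne_top_of_le_ne_top ?_ (iInf_le _ z)
      exact (EReal.add_lt_top hz (EReal.coe_ne_top _)).ne
    have hlow : ∀ y, ((f x - C : ℝ) : EReal) + B ≤
        ((f x + ⟪f' x, y - x⟫ + 1 / (p * γ) * ‖x - y‖ ^ p : ℝ) : EReal) + g y := by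
      intro y
      have hinner : -(‖f' x‖ * ‖y - x‖) ≤ ⟪f' x, y - x⟫ := by
        have := abs_real_inner_le_norm (f' x) (y - x)
        rw [abs_le] at this
        linarith [this.1]
      have hkey : f x - C + 1 / (p * γ'') * ‖x - y‖ ^ p ≤
          f x + ⟪f' x, y - x⟫ + 1 / (p * γ) * ‖x - y‖ ^ p := by
        have h1 := hC ‖x - y‖ (norm_nonneg _)
        rw [norm_sub_rev y x] at hinner
        nlinarith [hinner, h1]
      calc ((f x - C : ℝ) : EReal) + B
          ≤ ((f x - C : ℝ) : EReal) + (g y + ((1 / (p * γ'') * ‖x - y‖ ^ p : ℝ) : EReal)) :=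
            add_le_add_right (iInf_le _ y) _
        _ = ((f x - C + 1 / (p * γ'') * ‖x - y‖ ^ p : ℝ) : EReal) + g y := by
            rw [EReal.coe_add]; abel
        _ ≤ ((f x + ⟪f' x, y - x⟫ + 1 / (p * γ) * ‖x - y‖ ^ p : ℝ) : EReal) + g y := by
            exact add_le_add_left (EReal.coe_le_coe_iff.mpr hkey) _
    have : ((f x - C : ℝ) : EReal) + B ≤ hifbe f f' g p γ x := le_iInf hlow
    intro hcon
    rw [hcon, le_bot_iff] at this
    rcases EReal.add_eq_bot_iff.mp this with h | h
    · exact EReal.coe_ne_bot _ h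
    · exact hBbot h
  -- main set equality
  ext x
  simp only [Set.mem_setOf_eq]
  constructor
  · intro hx y
    have h1 : φ x ≤ ⨅ z, φ z := le_iInf hx
    exact le_trans (hA x) (le_trans h1 (hB y))
  · intro hx y
    have hm1 : hifbe f f' g p γ x ≤ ⨅ z, φ z := le_iInf fun z => le_trans (hx z) (hA z)
    have hm : hifbe f f' g p γ x = ⨅ z, φ z := le_antisymm hm1 (hB x)
    refine le_trans ?_ (iInf_le (fun z => φ z) y)
    -- show φ x ≤ ⨅ z, φ z
    by_contra hcon
    push_neg at hcon
    set m : EReal := ⨅ z, φ z with hmdef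
    have hmbot : m ≠ ⊥ := hm ▸ hbot x
    obtain ⟨t, hmt, htφ⟩ := EReal.exists_between_coe_real hcon
    obtain ⟨t₂, htt₂, ht₂φ⟩ := EReal.exists_between_coe_real htφ
    have hmtop : m ≠ ⊤ := (lt_trans hmt (lt_trans htt₂ (EReal.coe_lt_top t₂))).ne_top
    -- lower semicontinuity of φ at x: eventually t < φ y
    have hgx : ((t₂ - f x : ℝ) : EReal) < g x := by
      rcases eq_or_ne (g x) ⊤ with h | h
      · rw [h]; exact EReal.coe_lt_top _
      · have hgr := EReal.coe_toReal h (hproper_ne_bot x)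
        rw [← hgr, ← EReal.coe_add, EReal.coe_lt_coe_iff] at ht₂φ
        rw [← hgr, EReal.coe_lt_coe_iff]
        linarith
    have e1 : ∀ᶠ z in nhds x, ((t₂ - f x : ℝ) : EReal) < g z := hlsc x _ hgx
    have e2 : ∀ᶠ z in nhds x, f x - (t₂ - t) < f z := by
      have hcont : Filter.Tendsto f (nhds x) (nhds (f x)) := (hdiff x).continuousAt
      exact hcont.eventually
        (eventually_gt_nhds (by linarith [EReal.coe_lt_coe_iff.mp htt₂]))
    have e3 : ∀ᶠ z in nhds x, (t : EReal) < φ z := by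
      filter_upwards [e1, e2] with z h1 h2
      calc (t : EReal) < ((f z + (t₂ - f x) : ℝ) : EReal) := by
            rw [EReal.coe_lt_coe_iff]; linarith
        _ = (f z : EReal) + ((t₂ - f x : ℝ) : EReal) := EReal.coe_add _ _
        _ ≤ (f z : EReal) + g z := add_le_add_right h1.le _
    obtain ⟨δ, hδ0, hδ⟩ := Metric.eventually_nhds_iff.mp e3
    -- lower bound on hifbe x
    set b : ℝ := min t (m.toReal + c * δ ^ p) with hbdef
    have hmr : ((m.toReal : ℝ) : EReal) = m := EReal.coe_toReal hmtop hmbot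
    have hlow : ∀ z, ((b : ℝ) : EReal) ≤
        ((f x + ⟪f' x, z - x⟫ + 1 / (p * γ) * ‖x - z‖ ^ p : ℝ) : EReal) + g z := by
      intro z
      rcases lt_or_ge (dist z x) δ with h | h
      · -- near x : φ z > t
        have hz := hδ h
        have h1 : (f z : EReal) + g z ≤
            ((f x + ⟪f' x, z - x⟫ + 1 / (p * γ) * ‖x - z‖ ^ p : ℝ) : EReal) + g z := by
          refine add_le_add_left (EReal.coe_le_coe_iff.mpr ?_) _
          have hnn : (0:ℝ) ≤ c * ‖x - z‖ ^ p :=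
            mul_nonneg hc.le (Real.rpow_nonneg (norm_nonneg _) p)
          linarith [hR x z]
        calc ((b : ℝ) : EReal) ≤ (t : EReal) := EReal.coe_le_coe_iff.mpr (min_le_left _ _)
          _ ≤ (f z : EReal) + g z := hz.le
          _ ≤ _ := h1
      · -- far from x
        have hd : δ ≤ ‖x - z‖ := by
          rw [dist_eq_norm] at h
          rw [norm_sub_rev]
          exact h
        have hδp : δ ^ p ≤ ‖x - z‖ ^ p := Real.rpow_le_rpow hδ0.le hd hp0.le
        have h1 : ((f z + c * δ ^ p : ℝ) : EReal) + g z ≤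
            ((f x + ⟪f' x, z - x⟫ + 1 / (p * γ) * ‖x - z‖ ^ p : ℝ) : EReal) + g z := by
          refine add_le_add_left (EReal.coe_le_coe_iff.mpr ?_) _
          have hmono := mul_le_mul_of_nonneg_left hδp hc.le
          linarith [hR x z, hmono]
        have h2 : ((b : ℝ) : EReal) ≤ ((f z + c * δ ^ p : ℝ) : EReal) + g z := by
          calc ((b : ℝ) : EReal) ≤ ((m.toReal + c * δ ^ p : ℝ) : EReal) :=
                EReal.coe_le_coe_iff.mpr (min_le_right _ _)
            _ = ((c * δ ^ p : ℝ) : EReal) + m := by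
                rw [EReal.coe_add, ← hmr]; exact add_comm _ _
            _ ≤ ((c * δ ^ p : ℝ) : EReal) + ((f z : EReal) + g z) :=
                add_le_add_right (iInf_le (fun z => φ z) z) _
            _ = ((f z + c * δ ^ p : ℝ) : EReal) + g z := by
                rw [EReal.coe_add]; abel
        exact le_trans h2 h1
    have hge : ((b : ℝ) : EReal) ≤ m := hm ▸ le_iInf hlow
    rw [← hmr, EReal.coe_le_coe_iff] at hge
    have hmt' : m.toReal < t := by
      rw [← EReal.coe_lt_coe_iff, hmr]; exact hmt
    have hcd : 0 < c * δ ^ p := mul_pos hc (Real.rpow_pos_of_pos hδ0 p)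
    have : b > m.toReal := lt_min hmt' (by linarith)
    linarith
end

section
/- If f satisfies the high-order descent lemma with power p > 1 and constant L_p > 0, g is proper lsc, φ = f + g is coercive (φ(x) → +∞ as ‖x‖ → ∞), and γ ∈ (0, 1/L_p), then the high-order forward-backward envelope φ_γ^p is coercive. -/
/-! Subtracting the descent inequality from the model defining the envelope leaves
`φ y + c ‖x - y‖ ^ p` with `c = 1 / (p γ) - L / p > 0`, so `φ_γ^p` dominates the infimal
convolution of `φ` with `c ‖·‖ ^ p`. Since `φ` is lower semicontinuous and coercive it is
bounded below, and then this convolution is coercive: a minimiser candidate `y` is either far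
from the origin, where `φ y` is large, or far from `x`, where the kernel is large. -/

open scoped RealInnerProductSpace

open Filter Topology

theorem LowerSemicontinuous.coe_add {X : Type*} [TopologicalSpace X] {f : X → ℝ}
    {g : X → EReal} (hf : Continuous f) (hg : LowerSemicontinuous g) :
    LowerSemicontinuous fun x => (f x : EReal) + g x :=
  (continuous_coe_real_ereal.comp hf).lowerSemicontinuous.add' hg fun _ =>
    EReal.continuousAt_add (Or.inl (EReal.coe_ne_top _)) (Or.inl (EReal.coe_ne_bot _))

theorem LowerSemicontinuous.exists_coe_le_of_tendsto_cocompact {X : Type*} [TopologicalSpace X]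
    {φ : X → EReal} (hφ : LowerSemicontinuous φ) (hbot : ∀ x, φ x ≠ ⊥)
    (htop : Tendsto φ (cocompact X) (𝓝 ⊤)) : ∃ m : ℝ, ∀ x, (m : EReal) ≤ φ x := by
  obtain ⟨K, hK, hout⟩ := mem_cocompact.1 (EReal.tendsto_nhds_top_iff_real.1 htop 0)
  rcases K.eq_empty_or_nonempty with rfl | hne
  · exact ⟨0, fun x => (hout (Set.notMem_empty x)).le⟩
  obtain ⟨a, -, ha⟩ := LowerSemicontinuousOn.exists_isMinOn hne hK (hφ.lowerSemicontinuousOn K)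
  obtain ⟨r, -, hr⟩ := EReal.exists_between_coe_real (bot_lt_iff_ne_bot.2 (hbot a))
  refine ⟨min r 0, fun x => ?_⟩
  by_cases hx : x ∈ K
  · exact (EReal.coe_le_coe_iff.2 (min_le_left r 0)).trans (hr.le.trans (isMinOn_iff.1 ha x hx))
  · exact (EReal.coe_le_coe_iff.2 (min_le_right r 0)).trans (hout hx).le

theorem tendsto_iInf_add_mul_rpow_norm_sub {E : Type*} [NormedAddCommGroup E] [ProperSpace E]
    {φ : E → EReal} {m c p : ℝ} (hm : ∀ y, (m : EReal) ≤ φ y) (hc : 0 < c) (hp : 0 < p)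
    (hφ : Tendsto φ (cocompact E) (𝓝 ⊤)) :
    Tendsto (fun x => ⨅ y, φ y + ((c * ‖x - y‖ ^ p : ℝ) : EReal)) (cocompact E) (𝓝 ⊤) := by
  rw [EReal.tendsto_nhds_top_iff_real]
  intro M
  obtain ⟨R, -, hR⟩ := hasBasis_cobounded_norm.eventually_iff.1 <|
    Metric.cobounded_eq_cocompact (α := E) ▸ EReal.tendsto_nhds_top_iff_real.1 hφ (M + 1)
  obtain ⟨T, hT⟩ : ∃ T, ∀ t ≥ T, M + 1 - m ≤ c * t ^ p :=
    eventually_atTop.1 (((tendsto_rpow_atTop hp).const_mul_atTop hc).eventually_ge_atTop _)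
  filter_upwards [tendsto_norm_cocompact_atTop.eventually_ge_atTop (R + T)] with x hx
  refine (EReal.coe_lt_coe_iff.2 (lt_add_one M)).trans_le (le_iInf fun y => ?_)
  rcases le_or_gt R ‖y‖ with hy | hy
  · have hker : 0 ≤ c * ‖x - y‖ ^ p := by positivity
    calc ((M + 1 : ℝ) : EReal) = ((M + 1 : ℝ) : EReal) + ((0 : ℝ) : EReal) := by simp
      _ ≤ _ := add_le_add (hR hy).le (EReal.coe_le_coe_iff.2 hker)
  · have hfar : T ≤ ‖x - y‖ := by linarith [norm_sub_norm_le x y]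
    calc ((M + 1 : ℝ) : EReal) = (m : EReal) + ((M + 1 - m : ℝ) : EReal) := by
          rw [← EReal.coe_add, add_sub_cancel]
      _ ≤ _ := add_le_add (hm y) (EReal.coe_le_coe_iff.2 (hT _ hfar))

theorem iInf_add_mul_rpow_norm_sub_le_hifbe {n : ℕ} {f : EuclideanSpace ℝ (Fin n) → ℝ}
    {f' : EuclideanSpace ℝ (Fin n) → EuclideanSpace ℝ (Fin n)}
    (g : EuclideanSpace ℝ (Fin n) → EReal) {p L : ℝ} (γ : ℝ)
    (hdesc : ∀ x y, f y ≤ f x + ⟪f' x, y - x⟫ + L / p * ‖y - x‖ ^ p)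
    (x : EuclideanSpace ℝ (Fin n)) :
    ⨅ y, ((f y : EReal) + g y) + (((1 / (p * γ) - L / p) * ‖x - y‖ ^ p : ℝ) : EReal) ≤
      hifbe f f' g p γ x := by
  refine iInf_mono fun y => ?_
  have hmodel : f y + (1 / (p * γ) - L / p) * ‖x - y‖ ^ p ≤
      f x + ⟪f' x, y - x⟫ + 1 / (p * γ) * ‖x - y‖ ^ p := by
    linarith [norm_sub_rev y x ▸ hdesc x y]
  calc ((f y : EReal) + g y) + (((1 / (p * γ) - L / p) * ‖x - y‖ ^ p : ℝ) : EReal)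
      = ((f y + (1 / (p * γ) - L / p) * ‖x - y‖ ^ p : ℝ) : EReal) + g y := by
        rw [EReal.coe_add, add_right_comm]
    _ ≤ _ := add_le_add_left (EReal.coe_le_coe_iff.2 hmodel) _

theorem stmt_12_general {n : ℕ} (f : EuclideanSpace ℝ (Fin n) → ℝ)
    (f' : EuclideanSpace ℝ (Fin n) → EuclideanSpace ℝ (Fin n))
    (g : EuclideanSpace ℝ (Fin n) → EReal) (p L γ : ℝ)
    (hp : 1 < p) (hL : 0 < L) (hγ0 : 0 < γ) (hγ1 : γ < 1 / L)
    (hdiff : ∀ z, HasGradientAt f (f' z) z)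
    (hdesc : ∀ x y, f y ≤ f x + ⟪f' x, y - x⟫ + L / p * ‖y - x‖ ^ p)
    (hproper_ne_bot : ∀ z, g z ≠ ⊥)
    (hlsc : LowerSemicontinuous g)
    (hcoercive : Tendsto (fun x => (f x : EReal) + g x)
      (cocompact (EuclideanSpace ℝ (Fin n))) (𝓝 ⊤)) :
    Tendsto (hifbe f f' g p γ) (cocompact (EuclideanSpace ℝ (Fin n))) (𝓝 ⊤) := by
  have hp0 : 0 < p := one_pos.trans hp
  have hf : Continuous f := continuous_iff_continuousAt.2 fun z => (hdiff z).continuousAt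
  obtain ⟨m, hm⟩ := (hlsc.coe_add hf).exists_coe_le_of_tendsto_cocompact
    (fun z => EReal.add_ne_bot_iff.2 ⟨EReal.coe_ne_bot _, hproper_ne_bot z⟩) hcoercive
  have hc : 0 < 1 / (p * γ) - L / p := by
    rw [sub_pos, mul_comm, ← div_div, div_lt_div_iff_of_pos_right hp0]
    exact (lt_one_div hγ0 hL).1 hγ1
  exact tendsto_nhds_top_mono' (tendsto_iInf_add_mul_rpow_norm_sub hm hc hp0 hcoercive)
    (iInf_add_mul_rpow_norm_sub_le_hifbe g γ hdesc)

theorem stmt_12 {n : ℕ} (f : EuclideanSpace ℝ (Fin n) → ℝ)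
    (f' : EuclideanSpace ℝ (Fin n) → EuclideanSpace ℝ (Fin n))
    (g : EuclideanSpace ℝ (Fin n) → EReal) (p L γ : ℝ)
    (hp : 1 < p) (hL : 0 < L) (hγ0 : 0 < γ) (hγ1 : γ < 1 / L)
    (hdiff : ∀ z, HasGradientAt f (f' z) z)
    (hdesc : ∀ x y, f y ≤ f x + ⟪f' x, y - x⟫ + L / p * ‖y - x‖ ^ p)
    (hproper_ne_top : ∃ z, g z ≠ ⊤) (hproper_ne_bot : ∀ z, g z ≠ ⊥)
    (hlsc : LowerSemicontinuous g)
    (hcoercive : Tendsto (fun x => (f x : EReal) + g x)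
      (cocompact (EuclideanSpace ℝ (Fin n))) (𝓝 ⊤)) :
    Tendsto (hifbe f f' g p γ) (cocompact (EuclideanSpace ℝ (Fin n))) (𝓝 ⊤) :=
  stmt_12_general f f' g p L γ hp hL hγ0 hγ1 hdiff hdesc hproper_ne_bot hlsc hcoercive
end

section
/- Let f : ℝⁿ → ℝ be differentiable satisfying the high-order descent lemma with power p > 1 and constant L_p, let g be proper lsc and bounded below, γ ∈ (0, 1/L_p), and σ ∈ (0, (1 − γL_p)/(pγ)). If x̄ ∈ argmin_y { f(x) + ⟨∇f(x), y − x⟩ + g(y) + (1/(pγ))‖x − y‖^p } (exact high-order forward-backward step at x), then φ_γ^p(x̄) ≤ φ(x̄) ≤ φ_γ^p(x) − ((1/(pγ)) − L_p/p) ‖x − x̄‖^p, where φ = f + g and φ_γ^p is the envelope; in particular the envelope value strictly decreases whenever x̄ ≠ x. -/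
open scoped RealInnerProductSpace

theorem stmt_19 {n : ℕ} (f : EuclideanSpace ℝ (Fin n) → ℝ)
    (f' : EuclideanSpace ℝ (Fin n) → EuclideanSpace ℝ (Fin n))
    (g : EuclideanSpace ℝ (Fin n) → EReal) (p L γ σ : ℝ)
    (hp : 1 < p) (hL : 0 < L) (hγ0 : 0 < γ) (hγ1 : γ < 1 / L)
    (hσ0 : 0 < σ) (hσ1 : σ < (1 - γ * L) / (p * γ))
    (hdiff : ∀ z, HasGradientAt f (f' z) z)
    (hdesc : ∀ u v, f v ≤ f u + ⟪f' u, v - u⟫ + L / p * ‖v - u‖ ^ p)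
    (hproper_ne_top : ∃ z, g z ≠ ⊤) (hproper_ne_bot : ∀ z, g z ≠ ⊥)
    (hlsc : LowerSemicontinuous g)
    (hgbdd : ∃ m : ℝ, ∀ y, (m : EReal) ≤ g y)
    (x xbar : EuclideanSpace ℝ (Fin n))
    (hargmin : ∀ y : EuclideanSpace ℝ (Fin n),
      ((f x + ⟪f' x, xbar - x⟫ + 1 / (p * γ) * ‖x - xbar‖ ^ p : ℝ) : EReal) + g xbar ≤
        ((f x + ⟪f' x, y - x⟫ + 1 / (p * γ) * ‖x - y‖ ^ p : ℝ) : EReal) + g y) :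
    hifbe f f' g p γ xbar ≤ (f xbar : EReal) + g xbar ∧
    (f xbar : EReal) + g xbar ≤
      hifbe f f' g p γ x - (((1 / (p * γ) - L / p) * ‖x - xbar‖ ^ p : ℝ) : EReal) ∧
    (xbar ≠ x → hifbe f f' g p γ xbar < hifbe f f' g p γ x) := by
  have hp0 : p ≠ 0 := by positivity
  have hpγ : 0 < p * γ := by positivity
  have hγL : γ * L < 1 := (lt_div_iff₀ hL).mp hγ1
  -- g xbar is not ⊤
  obtain ⟨z0, hz0⟩ := hproper_ne_top
  have hgxbar_ne_top : g xbar ≠ ⊤ := by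
    intro h
    apply hz0
    have h1 := hargmin z0
    rw [h] at h1
    have h2 : ((f x + ⟪f' x, xbar - x⟫ + 1 / (p * γ) * ‖x - xbar‖ ^ p : ℝ) : EReal) + ⊤ = ⊤ :=
      rfl
    rw [h2, top_le_iff] at h1
    by_contra h
    lift g z0 to ℝ using ⟨h, hproper_ne_bot z0⟩ with gz
    rw [← EReal.coe_add] at h1
    exact (EReal.coe_ne_top _) h1
  obtain ⟨gb, hgb⟩ : ∃ r : ℝ, g xbar = r := by
    lift g xbar to ℝ using ⟨hgxbar_ne_top, hproper_ne_bot xbar⟩ with gb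
    exact ⟨gb, rfl⟩
  set c : ℝ := f x + ⟪f' x, xbar - x⟫ + 1 / (p * γ) * ‖x - xbar‖ ^ p with hc
  -- hifbe at x equals value at xbar
  have hifbe_x : hifbe f f' g p γ x = ((c + gb : ℝ) : EReal) := by
    apply le_antisymm
    · refine iInf_le_of_le xbar ?_
      rw [hgb, ← EReal.coe_add]
    · refine le_iInf fun y => ?_
      have := hargmin y
      rw [hgb, ← EReal.coe_add] at this
      exact this
  -- Part 1
  have part1 : hifbe f f' g p γ xbar ≤ (f xbar : EReal) + g xbar := by
    refine iInf_le_of_le xbar (le_of_eq ?_)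
    rw [sub_self, inner_zero_right, norm_zero, Real.zero_rpow hp0, mul_zero, add_zero, add_zero]
  -- the key real inequality
  set δ : ℝ := (1 / (p * γ) - L / p) * ‖x - xbar‖ ^ p with hδ
  have hreal : f xbar + gb ≤ c + gb - δ := by
    have hd := hdesc x xbar
    rw [norm_sub_rev] at hd
    have h2 : c - δ = f x + ⟪f' x, xbar - x⟫ + L / p * ‖x - xbar‖ ^ p := by
      rw [hc, hδ]; ring
    clear_value c δ
    linarith
  have part2 : (f xbar : EReal) + g xbar ≤
      hifbe f f' g p γ x - (((1 / (p * γ) - L / p) * ‖x - xbar‖ ^ p : ℝ) : EReal) := by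
    rw [hgb, hifbe_x, ← EReal.coe_add, ← hδ, ← EReal.coe_sub, EReal.coe_le_coe_iff]
    exact hreal
  refine ⟨part1, part2, fun hne => ?_⟩
  have hδpos : 0 < δ := by
    have hnorm : 0 < ‖x - xbar‖ := by
      rw [norm_pos_iff]
      exact sub_ne_zero.mpr fun h => hne h.symm
    have h1 : 0 < 1 / (p * γ) - L / p := by
      have : 1 / (p * γ) - L / p = (1 - γ * L) / (p * γ) := by
        field_simp
      rw [this]
      exact div_pos (by linarith) hpγ
    exact mul_pos h1 (Real.rpow_pos_of_pos hnorm p)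
  calc hifbe f f' g p γ xbar ≤ (f xbar : EReal) + g xbar := part1
    _ = ((f xbar + gb : ℝ) : EReal) := by rw [hgb, ← EReal.coe_add]
    _ ≤ ((c + gb - δ : ℝ) : EReal) := by exact_mod_cast hreal
    _ < ((c + gb : ℝ) : EReal) := by exact_mod_cast sub_lt_self _ hδpos
    _ = hifbe f f' g p γ x := hifbe_x.symm
end
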